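/- arXiv:1807.08263 — 2 statements merged into one kernel-verified Lean document; each statement's English description precedes it below -/
import Mathlib

section
/- Let α > 0, b ≥ 2 an integer, T a positive integer, and ℓ > 0. If nonnegative reals x̄_1, …, x̄_T satisfy ∑_{k=1}^T x̄_k ≥ ℓ, then max_{1 ≤ k ≤ T} (x̄_k^α + k log b) ≥ (((α+1)/α) · (log b) · ℓ)^{α/(α+1)}, provided this maximum is at least T log b. -/
/-!
Write `L = log b`, `β = (α + 1) / α` and `Ξ` for the maximum. Each `x̄ₖ` satisfies
`x̄ₖ ^ α ≤ cₖ := Ξ - k L`, and `cₖ ≥ 0` because `Ξ ≥ T L`. By Bernoulli's inequality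
`β L x̄ₖ ≤ β L cₖ ^ (β - 1) ≤ (cₖ + L) ^ β - cₖ ^ β`, and since `cₖ + L = cₖ₋₁` these bounds
telescope to `β L ℓ ≤ Ξ ^ β - (Ξ - T L) ^ β ≤ Ξ ^ β`.
-/

open Real Finset

lemma mul_rpow_sub_one_mul_le_add_rpow_sub_rpow {c L β : ℝ} (hc : 0 ≤ c) (hL : 0 ≤ L)
    (hβ : 1 ≤ β) : β * c ^ (β - 1) * L ≤ (c + L) ^ β - c ^ β := by
  rcases hc.eq_or_lt with rfl | hc
  · rcases (zero_le_one.trans hβ).eq_or_lt with rfl | hβ0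
    · linarith
    rcases hβ.eq_or_lt with rfl | hβ1
    · simp
    simp [zero_rpow hβ0.ne', zero_rpow (sub_pos.2 hβ1).ne', rpow_nonneg hL]
  · have bernoulli : 1 + β * (L / c) ≤ (1 + L / c) ^ β :=
      one_add_mul_self_le_rpow_one_add (by linarith [div_nonneg hL hc.le]) hβ
    calc β * c ^ (β - 1) * L = c ^ β * (1 + β * (L / c)) - c ^ β := by
          rw [rpow_sub_one hc.ne']
          field_simp
          ring
      _ ≤ c ^ β * (1 + L / c) ^ β - c ^ β := by gcongr
      _ = (c + L) ^ β - c ^ β := by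
          rw [← mul_rpow hc.le (by positivity), mul_one_add, mul_div_cancel₀ _ hc.ne']

lemma mul_le_add_rpow_sub_rpow_of_rpow_le {α L y c : ℝ} (hα : 0 < α) (hL : 0 ≤ L)
    (hy : 0 ≤ y) (hc : 0 ≤ c) (hyc : y ^ α ≤ c) :
    (α + 1) / α * L * y ≤ (c + L) ^ ((α + 1) / α) - c ^ ((α + 1) / α) := by
  have hβ : 1 ≤ (α + 1) / α := by rw [le_div_iff₀ hα]; linarith
  have hβ_sub_one : (α + 1) / α - 1 = α⁻¹ := by field_simp; ring
  have hy_le : y ≤ c ^ α⁻¹ := (le_rpow_inv_iff_of_pos hy hc hα).2 hyc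
  calc (α + 1) / α * L * y ≤ (α + 1) / α * c ^ ((α + 1) / α - 1) * L := by
        rw [hβ_sub_one, mul_right_comm]
        gcongr
    _ ≤ _ := mul_rpow_sub_one_mul_le_add_rpow_sub_rpow hc hL hβ

lemma sum_Icc_sub_mul_telescope {M : Type*} [AddCommGroup M] (f : ℝ → M) (Ξ L : ℝ) (T : ℕ) :
    ∑ k ∈ Icc 1 T, (f (Ξ - k * L + L) - f (Ξ - k * L)) = f Ξ - f (Ξ - T * L) := by
  induction T with
  | zero => simp
  | succ T ih =>
    rw [sum_Icc_succ_top (by omega), ih]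
    push_cast
    rw [show Ξ - (T + 1) * L + L = Ξ - T * L by ring]
    abel

lemma mul_sum_le_rpow_of_rpow_add_mul_le {α L Ξ : ℝ} {T : ℕ} {x : ℕ → ℝ} (hα : 0 < α)
    (hL : 0 ≤ L) (hx : ∀ k ∈ Icc 1 T, 0 ≤ x k) (hTΞ : T * L ≤ Ξ)
    (hxΞ : ∀ k ∈ Icc 1 T, x k ^ α + k * L ≤ Ξ) :
    (α + 1) / α * L * ∑ k ∈ Icc 1 T, x k ≤ Ξ ^ ((α + 1) / α) := by
  set β := (α + 1) / α
  have hΞ_sub : ∀ k ∈ Icc 1 T, 0 ≤ Ξ - k * L := fun k hk => by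
    have hkT : (k : ℝ) ≤ T := by exact_mod_cast (mem_Icc.1 hk).2
    nlinarith
  calc β * L * ∑ k ∈ Icc 1 T, x k
      = ∑ k ∈ Icc 1 T, β * L * x k := mul_sum _ _ _
    _ ≤ ∑ k ∈ Icc 1 T, ((Ξ - k * L + L) ^ β - (Ξ - k * L) ^ β) :=
        sum_le_sum fun k hk => mul_le_add_rpow_sub_rpow_of_rpow_le hα hL (hx k hk)
          (hΞ_sub k hk) (by linarith [hxΞ k hk])
    _ = Ξ ^ β - (Ξ - T * L) ^ β := sum_Icc_sub_mul_telescope (· ^ β) Ξ L T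
    _ ≤ Ξ ^ β := sub_le_self _ (rpow_nonneg (by linarith) _)

theorem max_optimization_bound_general (α : ℝ) (hα : 0 < α) (b : ℕ)
    (T : ℕ) (ℓ : ℝ) (hℓ : 0 < ℓ)
    (x : ℕ → ℝ) (hx : ∀ k, 0 ≤ x k)
    (hsum : ℓ ≤ ∑ k ∈ Finset.Icc 1 T, x k)
    (hne : (Finset.Icc 1 T).Nonempty)
    (hmax : (T : ℝ) * Real.log b ≤
      (Finset.Icc 1 T).sup' hne fun k => x k ^ α + (k : ℝ) * Real.log b) :
    ((α + 1) / α * Real.log b * ℓ) ^ (α / (α + 1)) ≤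
      (Finset.Icc 1 T).sup' hne fun k => x k ^ α + (k : ℝ) * Real.log b := by
  set Ξ := (Icc 1 T).sup' hne fun k => x k ^ α + (k : ℝ) * log b
  have hL : 0 ≤ log b := log_natCast_nonneg b
  have hΞ : 0 ≤ Ξ := (by positivity : (0 : ℝ) ≤ T * log b).trans hmax
  have hbound : (α + 1) / α * log b * ∑ k ∈ Icc 1 T, x k ≤ Ξ ^ ((α + 1) / α) :=
    mul_sum_le_rpow_of_rpow_add_mul_le hα hL (fun k _ => hx k) hmax
      fun k hk => le_sup' (fun k => x k ^ α + (k : ℝ) * log b) hk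
  rw [← inv_div (α + 1) α, rpow_inv_le_iff_of_pos (by positivity) hΞ (by positivity)]
  exact le_trans (by gcongr) hbound

theorem max_optimization_bound (α : ℝ) (hα : 0 < α) (b : ℕ) (hb : 2 ≤ b)
    (T : ℕ) (hT : 0 < T) (ℓ : ℝ) (hℓ : 0 < ℓ)
    (x : ℕ → ℝ) (hx : ∀ k, 0 ≤ x k)
    (hsum : ℓ ≤ ∑ k ∈ Finset.Icc 1 T, x k)
    (hne : (Finset.Icc 1 T).Nonempty)
    (hmax : (T : ℝ) * Real.log b ≤
      (Finset.Icc 1 T).sup' hne fun k => x k ^ α + (k : ℝ) * Real.log b) :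
    ((α + 1) / α * Real.log b * ℓ) ^ (α / (α + 1)) ≤
      (Finset.Icc 1 T).sup' hne fun k => x k ^ α + (k : ℝ) * Real.log b :=
  max_optimization_bound_general α hα b T ℓ hℓ x hx hsum hne hmax
end

section
/- Let b ≥ 2, T ≥ s ≥ 1 integers and let t be the b-ary tree of depth T pruned at a vertex u* of depth s. Suppose edge labels x_v ≥ 0 are assigned to all vertices v ∈ t \\ {root}, and set s_u = ∑_{root ≺ v ⪯ u} x_v. If s_u ≥ ℓ for every vertex u at depth T of t, then ∑_{k=1}^T x̄_k ≥ (1 - b^{-s}) ℓ, where x̄_k is the average of x_v over vertices v of t at depth k. -/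
open scoped Classical

/-- A vertex `v` at depth `k` of the complete `b`-ary tree belongs to the tree pruned
at the vertex `u` of depth `s` iff the first `s` coordinates of `v` do not all agree
with `u`. -/
def prunedKept (b s k : ℕ) (u : Fin s → Fin b) (v : Fin k → Fin b) : Prop :=
  ∀ h : s ≤ k, ∃ i : Fin s, v (Fin.castLE h i) ≠ u i

/-!
Double counting over the leaves of the pruned tree. Pruning removes at most `b ^ (T - s)` of
the `b ^ T` leaves, and each surviving leaf has path sum at least `ℓ`, so the path sums over
the surviving leaves add up to at least `(1 - b ^ (-s)) b ^ T ℓ`. Conversely, a vertex of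
depth `k` lies on at most `b ^ (T - k)` of these paths and depth `k` has at most `b ^ k`
vertices, so depth `k` contributes at most `b ^ T` times the average label `x̄ₖ`.
-/

open Finset

theorem Finset.sum_comp_le_mul_sum_of_card_fiber_le {ι κ R : Type*} [DecidableEq κ]
    [Semiring R] [PartialOrder R] [IsOrderedRing R]
    {s : Finset ι} {t : Finset κ} {g : ι → κ} (hg : ∀ a ∈ s, g a ∈ t)
    {f : κ → R} (hf : ∀ b ∈ t, 0 ≤ f b) {n : ℕ} (hn : ∀ b ∈ t, #{a ∈ s | g a = b} ≤ n) :
    ∑ a ∈ s, f (g a) ≤ n * ∑ b ∈ t, f b := by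
  rw [← sum_fiberwise_of_maps_to hg, mul_sum]
  refine sum_le_sum fun b hb => ?_
  rw [sum_congr rfl fun a ha => by rw [(mem_filter.mp ha).2], sum_const, nsmul_eq_mul]
  exact mul_le_mul_of_nonneg_right (Nat.mono_cast (hn b hb)) (hf b hb)

theorem Finset.sum_div_le_sum_div_card {ι K : Type*} [Field K] [LinearOrder K]
    [IsStrictOrderedRing K] {s : Finset ι} {f : ι → K} (hf : ∀ i ∈ s, 0 ≤ f i) {n : ℕ}
    (hn : #s ≤ n) : (∑ i ∈ s, f i) / n ≤ (∑ i ∈ s, f i) / #s := by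
  obtain rfl | hs := s.eq_empty_or_nonempty
  · simp
  exact div_le_div_of_nonneg_left (sum_nonneg hf) (by exact_mod_cast hs.card_pos)
    (by exact_mod_cast hn)

theorem Fin.card_filter_take_eq_le {α : Type*} [Fintype α] {k T : ℕ} (hk : k ≤ T)
    (v : Fin k → α) : #{w : Fin T → α | Fin.take k hk w = v} ≤ Fintype.card α ^ (T - k) := by
  refine (card_le_card_of_injOn (t := univ)
    (fun w : Fin T → α => fun j : Fin (T - k) => w ⟨k + j, by omega⟩)
    (fun w _ => mem_univ _) ?_).trans_eq (by simp)
  intro w₁ hw₁ w₂ hw₂ hdrop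
  simp only [coe_filter, mem_univ, true_and] at hw₁ hw₂
  funext i
  by_cases hi : (i : ℕ) < k
  · exact (congrFun hw₁ ⟨i, hi⟩).trans (congrFun hw₂ ⟨i, hi⟩).symm
  · simpa [Nat.add_sub_cancel' (not_lt.mp hi)] using congrFun hdrop ⟨i - k, by omega⟩

section PrunedTree

variable {b s k T : ℕ} {u : Fin s → Fin b}

theorem prunedKept.take {w : Fin T → Fin b} (hw : prunedKept b s T u w) (hk : k ≤ T) :
    prunedKept b s k u (Fin.take k hk w) :=
  fun hs => hw (hs.trans hk)

theorem le_card_prunedKept_leaves (hb : 0 < b) (hsT : s ≤ T) :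
    (1 - (b : ℝ) ^ (-(s : ℤ))) * (b : ℝ) ^ T ≤ #{w | prunedKept b s T u w} := by
  have hpruned : #{w : Fin T → Fin b | ¬ prunedKept b s T u w} ≤ b ^ (T - s) := by
    refine (card_le_card fun w hw => ?_).trans ((Fin.card_filter_take_eq_le hsT u).trans_eq
      (by rw [Fintype.card_fin]))
    simp only [prunedKept, not_forall, not_exists, not_not, mem_filter, mem_univ,
      true_and] at hw ⊢
    obtain ⟨_, hw⟩ := hw
    exact funext hw
  have hcount : b ^ T ≤ #{w | prunedKept b s T u w} + b ^ (T - s) := by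
    have := card_filter_add_card_filter_not (s := univ) (fun w => prunedKept b s T u w)
    simp only [card_univ, Fintype.card_pi, Fintype.card_fin, prod_const] at this
    omega
  have hpow : (b : ℝ) ^ (-(s : ℤ)) * (b : ℝ) ^ T = (b : ℝ) ^ (T - s) := by
    rw [← zpow_natCast, ← zpow_natCast, ← zpow_add₀ (by positivity), Nat.cast_sub hsT]
    ring_nf
  rw [sub_mul, one_mul, hpow]
  have hcount' : (b : ℝ) ^ T ≤ #{w | prunedKept b s T u w} + (b : ℝ) ^ (T - s) := by
    exact_mod_cast hcount
  linarith

theorem sum_prunedKept_leaves_le_pow_mul_average (hb : 0 < b) (hk : k ≤ T)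
    {f : (Fin k → Fin b) → ℝ} (hf : ∀ v, 0 ≤ f v) :
    ∑ w ∈ {w | prunedKept b s T u w}, f (Fin.take k hk w) ≤
      (b : ℝ) ^ T * ((∑ v ∈ {v | prunedKept b s k u v}, f v) / #{v | prunedKept b s k u v}) := by
  have hlevel : #{v : Fin k → Fin b | prunedKept b s k u v} ≤ b ^ k := by
    simpa using card_filter_le univ (fun v => prunedKept b s k u v)
  calc ∑ w ∈ {w | prunedKept b s T u w}, f (Fin.take k hk w)
      ≤ ((b ^ (T - k) : ℕ) : ℝ) * ∑ v ∈ {v | prunedKept b s k u v}, f v := by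
        refine sum_comp_le_mul_sum_of_card_fiber_le (fun w hw => ?_) (fun v _ => hf v)
          fun v _ => (card_le_card fun w hw => ?_).trans
            (by simpa using Fin.card_filter_take_eq_le hk v)
        · simp only [mem_filter, mem_univ, true_and] at hw ⊢
          exact hw.take hk
        · simp only [mem_filter, mem_univ, true_and] at hw ⊢
          exact hw.2
    _ = (b : ℝ) ^ T * ((∑ v ∈ {v | prunedKept b s k u v}, f v) / ((b ^ k : ℕ) : ℝ)) := by
        push_cast
        rw [pow_sub₀ _ (by positivity) hk]
        field_simp
    _ ≤ _ := mul_le_mul_of_nonneg_left (sum_div_le_sum_div_card (fun v _ => hf v) hlevel)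
        (by positivity)

theorem card_prunedKept_leaves_mul_le (hb : 0 < b) {ℓ : ℝ}
    {x : (k : ℕ) → (Fin k → Fin b) → ℝ} (hx : ∀ k v, 0 ≤ x k v)
    (hpath : ∀ w : Fin T → Fin b, prunedKept b s T u w →
      ℓ ≤ ∑ k ∈ (Icc 1 T).attach, x k (Fin.take k (mem_Icc.mp k.2).2 w)) :
    #{w | prunedKept b s T u w} * ℓ ≤ (b : ℝ) ^ T *
      ∑ k ∈ Icc 1 T, (∑ v ∈ {v | prunedKept b s k u v}, x k v) / #{v | prunedKept b s k u v} :=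
  calc #{w | prunedKept b s T u w} * ℓ
      ≤ ∑ w ∈ {w | prunedKept b s T u w}, ∑ k ∈ (Icc 1 T).attach,
          x k (Fin.take k (mem_Icc.mp k.2).2 w) := by
        rw [← nsmul_eq_mul]
        exact card_nsmul_le_sum _ _ _ fun w hw => hpath w (mem_filter.mp hw).2
    _ = ∑ k ∈ (Icc 1 T).attach, ∑ w ∈ {w | prunedKept b s T u w},
          x k (Fin.take k (mem_Icc.mp k.2).2 w) := sum_comm
    _ ≤ ∑ k ∈ (Icc 1 T).attach, (b : ℝ) ^ T *
          ((∑ v ∈ {v | prunedKept b s k u v}, x k v) / #{v | prunedKept b s k u v}) :=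
        sum_le_sum fun k _ => sum_prunedKept_leaves_le_pow_mul_average hb _ (hx k)
    _ = _ := by
        rw [← mul_sum, sum_attach (Icc 1 T) fun k =>
          (∑ v ∈ {v | prunedKept b s k u v}, x k v) / #{v | prunedKept b s k u v}]

end PrunedTree

theorem pruned_tree_average_bound_general (b s T : ℕ) (hb : 2 ≤ b) (hsT : s ≤ T)
    (u : Fin s → Fin b) (ℓ : ℝ)
    (x : (k : ℕ) → (Fin k → Fin b) → ℝ)
    (hx : ∀ k (v : Fin k → Fin b), 0 ≤ x k v)
    (hpath : ∀ w : Fin T → Fin b, prunedKept b s T u w →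
      ℓ ≤ ∑ k ∈ (Finset.Icc 1 T).attach,
        x k.1 (fun i : Fin k.1 => w (Fin.castLE (Finset.mem_Icc.mp k.2).2 i))) :
    (1 - (b : ℝ) ^ (-(s : ℤ))) * ℓ ≤
      ∑ k ∈ Finset.Icc 1 T,
        (∑ v ∈ Finset.univ.filter (prunedKept b s k u), x k v) /
          ((Finset.univ.filter (prunedKept b s k u) :
            Finset (Fin k → Fin b)).card : ℝ) := by
  have hb₀ : 0 < b := by omega
  obtain hℓ | hℓ := le_or_gt ℓ 0
  · have hfactor : 0 ≤ 1 - (b : ℝ) ^ (-(s : ℤ)) :=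
      sub_nonneg.mpr (zpow_le_one_of_nonpos₀ (by exact_mod_cast hb₀) (by omega))
    exact (mul_nonpos_of_nonneg_of_nonpos hfactor hℓ).trans <|
      sum_nonneg fun k _ => div_nonneg (sum_nonneg fun v _ => hx k v) (Nat.cast_nonneg _)
  refine le_of_mul_le_mul_left ?_ (pow_pos (Nat.cast_pos.mpr hb₀ : (0 : ℝ) < b) T)
  calc (b : ℝ) ^ T * ((1 - (b : ℝ) ^ (-(s : ℤ))) * ℓ)
      = (1 - (b : ℝ) ^ (-(s : ℤ))) * (b : ℝ) ^ T * ℓ := by ring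
    _ ≤ #{w | prunedKept b s T u w} * ℓ :=
        mul_le_mul_of_nonneg_right (le_card_prunedKept_leaves hb₀ hsT) hℓ.le
    _ ≤ _ := card_prunedKept_leaves_mul_le hb₀ hx hpath

theorem pruned_tree_average_bound (b s T : ℕ) (hb : 2 ≤ b) (hs : 1 ≤ s) (hsT : s ≤ T)
    (u : Fin s → Fin b) (ℓ : ℝ)
    (x : (k : ℕ) → (Fin k → Fin b) → ℝ)
    (hx : ∀ k (v : Fin k → Fin b), 0 ≤ x k v)
    (hpath : ∀ w : Fin T → Fin b, prunedKept b s T u w →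
      ℓ ≤ ∑ k ∈ (Finset.Icc 1 T).attach,
        x k.1 (fun i : Fin k.1 => w (Fin.castLE (Finset.mem_Icc.mp k.2).2 i))) :
    (1 - (b : ℝ) ^ (-(s : ℤ))) * ℓ ≤
      ∑ k ∈ Finset.Icc 1 T,
        (∑ v ∈ Finset.univ.filter (prunedKept b s k u), x k v) /
          ((Finset.univ.filter (prunedKept b s k u) :
            Finset (Fin k → Fin b)).card : ℝ) :=
  pruned_tree_average_bound_general b s T hb hsT u ℓ x hx hpath
end
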